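/- arXiv:2112.04160 — 2 statements merged into one kernel-verified Lean document; each statement's English description precedes it below -/
import Mathlib

section
/- Let $\mathcal{C} \subseteq \mathbb{R}^n$ be a nonempty closed convex set, $\hat{x} \notin \mathcal{C}$ with $d := \mathrm{dist}(\hat{x},\mathcal{C}) > 0$, and suppose $x_1, x_2$ satisfy $\|x_i - \hat{x}\|_2 \le d/4$ for $i = 1,2$ and $\|x_1 - x_2\|_2 \le d/4$. Let $z_1$ be the projection of $x_1$ onto $\mathcal{C}$. Then $(x_1 - z_1)^\top(x_2 - z_1) \ge \frac{1}{4} d^2 > 0$, i.e., $x_2$ violates the projection cut generated at $x_1$. -/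
open scoped RealInnerProductSpace

/-- If `x₁, x₂` are close to a point `x̂` far from `C`, then `x₂` violates the
projection cut generated at `x₁` by at least `d²/4 > 0`. -/
theorem stmt6 (n : ℕ) (C : Set (EuclideanSpace ℝ (Fin n))) (hne : C.Nonempty)
    (hcl : IsClosed C) (hconv : Convex ℝ C) (xhat x1 x2 z1 : EuclideanSpace ℝ (Fin n))
    (hxhat : xhat ∉ C) (hd : 0 < Metric.infDist xhat C)
    (h1 : ‖x1 - xhat‖ ≤ Metric.infDist xhat C / 4)
    (h2 : ‖x2 - xhat‖ ≤ Metric.infDist xhat C / 4)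
    (h12 : ‖x1 - x2‖ ≤ Metric.infDist xhat C / 4)
    (hz1 : z1 ∈ C) (hproj1 : ∀ w ∈ C, ‖x1 - z1‖ ≤ ‖x1 - w‖) :
    (1 / 4) * Metric.infDist xhat C ^ 2 ≤ ⟪x1 - z1, x2 - z1⟫ ∧
      0 < (1 / 4) * Metric.infDist xhat C ^ 2 := by
  set d := Metric.infDist xhat C with hdd
  have h3 : Metric.infDist x1 C ≤ dist x1 z1 := Metric.infDist_le_dist_of_mem hz1
  have h4 : d ≤ Metric.infDist x1 C + dist xhat x1 :=
    Metric.infDist_le_infDist_add_dist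
  have h5 : dist xhat x1 = ‖x1 - xhat‖ := by rw [dist_comm, dist_eq_norm]
  have h6 : dist x1 z1 = ‖x1 - z1‖ := dist_eq_norm _ _
  have hlb : 3 * d / 4 ≤ ‖x1 - z1‖ := by
    rw [h5] at h4; rw [h6] at h3; linarith
  have hexp : ⟪x1 - z1, x2 - z1⟫ = ‖x1 - z1‖ ^ 2 + ⟪x1 - z1, x2 - x1⟫ := by
    have : x2 - z1 = (x1 - z1) + (x2 - x1) := by abel
    rw [this, inner_add_right, real_inner_self_eq_norm_sq]
  have hcs : |⟪x1 - z1, x2 - x1⟫| ≤ ‖x1 - z1‖ * ‖x2 - x1‖ := abs_real_inner_le_norm _ _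
  have h21 : ‖x2 - x1‖ = ‖x1 - x2‖ := norm_sub_rev _ _
  have habs := abs_le.mp hcs
  constructor
  · rw [hexp]
    nlinarith [norm_nonneg (x1 - z1), norm_nonneg (x1 - x2)]
  · positivity
end

section
/- Suppose a sequence $\{x^{(n)}\}$ in $\mathbb{R}^n$ satisfies: for each $n$, $x^{(n+1)}$ satisfies all projection cuts $(x^{(k)} - z^{(k)})^\top(x^{(n+1)} - z^{(k)}) \le 0$ for $k \le n$, where $z^{(k)}$ is the Euclidean projection of $x^{(k)}$ onto a nonempty closed convex set $\mathcal{C}$ and $x^{(k)} \notin \mathcal{C}$ for all $k$. Then every limit point of a convergent subsequence of $\{x^{(n)}\}$ lies in $\mathcal{C}$ (hence on the boundary of $\mathcal{C}$, since no iterate is in $\mathcal{C}$). -/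
/-!
If `x` satisfies the cut generated at an earlier iterate `y` with projection `z ∈ C`, then
`‖y - z‖² = ⟪y - z, y - x⟫ + ⟪y - z, x - z⟫ ≤ ‖y - z‖ ‖y - x‖`, so the distance from `y` to `C`
is at most the length of any later step. Along a convergent subsequence consecutive terms
become arbitrarily close, hence so do the iterates and their projections, and the limit is a
limit of points of the closed set `C`.
-/

open Filter
open scoped RealInnerProductSpace

theorem norm_sub_le_norm_sub_of_inner_sub_nonpos {E : Type*} [NormedAddCommGroup E]
    [InnerProductSpace ℝ E] {x y z : E} (h : ⟪y - z, x - z⟫ ≤ 0) : ‖y - z‖ ≤ ‖y - x‖ := by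
  have hsplit : ⟪y - z, y - z⟫ = ⟪y - z, y - x⟫ + ⟪y - z, x - z⟫ := by
    rw [← inner_add_right, sub_add_sub_cancel]
  have hsq : ‖y - z‖ ^ 2 ≤ ‖y - z‖ * ‖y - x‖ := by
    rw [← real_inner_self_eq_norm_sq, hsplit]
    linarith [real_inner_le_norm (y - z) (y - x)]
  nlinarith [norm_nonneg (y - z), norm_nonneg (y - x)]

theorem tendsto_of_norm_sub_le_norm_sub_succ {E : Type*} [SeminormedAddCommGroup E]
    {a b : ℕ → E} {p : E} (ha : Tendsto a atTop (nhds p))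
    (hab : ∀ i, ‖a i - b i‖ ≤ ‖a i - a (i + 1)‖) : Tendsto b atTop (nhds p) := by
  have hstep : Tendsto (fun i => a i - a (i + 1)) atTop (nhds 0) := by
    simpa using ha.sub (ha.comp (tendsto_add_atTop_nat 1))
  have hgap : Tendsto (fun i => a i - b i) atTop (nhds 0) :=
    squeeze_zero_norm hab (tendsto_zero_iff_norm_tendsto_zero.mp hstep)
  simpa using ha.sub hgap

theorem stmt7_general (n : ℕ) (C : Set (EuclideanSpace ℝ (Fin n)))
    (hcl : IsClosed C)
    (x z : ℕ → EuclideanSpace ℝ (Fin n))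
    (hzC : ∀ k, z k ∈ C)
    (hcut : ∀ m k : ℕ, k ≤ m → ⟪x k - z k, x (m + 1) - z k⟫ ≤ 0)
    (φ : ℕ → ℕ) (hφ : StrictMono φ) (p : EuclideanSpace ℝ (Fin n))
    (hlim : Tendsto (x ∘ φ) atTop (nhds p)) :
    p ∈ C := by
  have hdist : ∀ i, ‖x (φ i) - z (φ i)‖ ≤ ‖x (φ i) - x (φ (i + 1))‖ := by
    intro i
    obtain ⟨d, hd⟩ := Nat.exists_eq_add_of_lt (hφ (Nat.lt_succ_self i))
    rw [hd]
    exact norm_sub_le_norm_sub_of_inner_sub_nonpos (hcut _ _ le_self_add)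
  have hz : Tendsto (z ∘ φ) atTop (nhds p) :=
    tendsto_of_norm_sub_le_norm_sub_succ hlim hdist
  exact hcl.mem_of_tendsto hz (Eventually.of_forall fun i => hzC (φ i))

/-- If each iterate satisfies all previously generated projection cuts, then every
limit point of a convergent subsequence of the iterates lies in `C`. -/
theorem stmt7 (n : ℕ) (C : Set (EuclideanSpace ℝ (Fin n))) (hne : C.Nonempty)
    (hcl : IsClosed C) (hconv : Convex ℝ C)
    (x z : ℕ → EuclideanSpace ℝ (Fin n))
    (hzC : ∀ k, z k ∈ C)
    (hproj : ∀ k, ∀ w ∈ C, ‖x k - z k‖ ≤ ‖x k - w‖)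
    (hxnot : ∀ k, x k ∉ C)
    (hcut : ∀ m k : ℕ, k ≤ m → ⟪x k - z k, x (m + 1) - z k⟫ ≤ 0)
    (φ : ℕ → ℕ) (hφ : StrictMono φ) (p : EuclideanSpace ℝ (Fin n))
    (hlim : Tendsto (x ∘ φ) atTop (nhds p)) :
    p ∈ C :=
  stmt7_general n C hcl x z hzC hcut φ hφ p hlim
end
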